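/- arXiv:1203.0583 — 2 statements merged into one kernel-verified Lean document; each statement's English description precedes it below -/
import Mathlib

section
/- Let A be an associative unital algebra over a field K, m an odd positive integer, and X₀, X₁ ∈ A invertible elements satisfying the braid relation [X₀X₁⋯]_m = [X₁X₀⋯]_m. For q, l invertible scalars with q⁻¹ − q ≠ 0, set E_i = (l/(q⁻¹ − q))·(X_i − q)(X_i + q⁻¹) for i = 0, 1, and let W = [X₀X₁⋯]_{m−1}. Then E₁·W = W·E₀. -/
/-- The alternating product of length `m` beginning with `x`:
`altProd x y 3 = x * y * x`, etc. -/
def altProd {A : Type*} [Monoid A] (x y : A) : ℕ → A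
  | 0 => 1
  | n + 1 => x * altProd y x n

lemma altProd_odd {A : Type*} [Monoid A] :
    ∀ (k : ℕ) (x y : A), altProd x y (2 * k + 1) = altProd x y (2 * k) * x := by
  intro k
  induction k with
  | zero => intro x y; simp [altProd]
  | succ n ih =>
      intro x y
      have h1 : 2 * (n + 1) + 1 = (2 * n + 1) + 1 + 1 := by ring
      have h2 : 2 * (n + 1) = (2 * n + 1) + 1 := by ring
      rw [h1, h2]
      show x * (y * altProd x y (2 * n + 1)) = (x * altProd y x (2 * n + 1)) * x
      have e2 : y * altProd x y (2 * n) = altProd y x (2 * n) * y := by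
        rw [← ih y x, altProd]
      rw [ih x y, ih y x, ← e2]
      simp [mul_assoc]

/-- For invertible `X₀, X₁` satisfying the braid relation of odd length `m`, and
`Eᵢ = (l/(q⁻¹−q))·(Xᵢ − q)(Xᵢ + q⁻¹)`, `W = [X₀X₁⋯]_{m−1}`, one has `E₁·W = W·E₀`. -/
theorem stmt7 {K A : Type*} [Field K] [Ring A] [Algebra K A]
    (m : ℕ) (hm : Odd m) (X₀ X₁ : A) (hX₀ : IsUnit X₀) (hX₁ : IsUnit X₁)
    (hbraid : altProd X₀ X₁ m = altProd X₁ X₀ m)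
    (q l : K) (hq : q ≠ 0) (hl : l ≠ 0) (hq2 : q⁻¹ - q ≠ 0) :
    ((l / (q⁻¹ - q)) • ((X₁ - algebraMap K A q) * (X₁ + algebraMap K A q⁻¹)))
        * altProd X₀ X₁ (m - 1) =
      altProd X₀ X₁ (m - 1)
        * ((l / (q⁻¹ - q)) • ((X₀ - algebraMap K A q) * (X₀ + algebraMap K A q⁻¹))) := by
  obtain ⟨k, hk⟩ := hm
  set W := altProd X₀ X₁ (m - 1) with hW
  have hm1 : m - 1 = 2 * k := by omega
  have h : X₁ * W = W * X₀ := by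
    have e1 : altProd X₀ X₁ m = W * X₀ := by
      rw [hW, hm1, show m = 2 * k + 1 by omega, altProd_odd k X₀ X₁]
    have e2 : altProd X₁ X₀ m = X₁ * W := by
      rw [show m = 2 * k + 1 by omega, altProd, hW, hm1]
    rw [← e1, ← e2, hbraid]
  have h2 : X₁ * (X₁ * W) = W * (X₀ * X₀) := by
    rw [h, ← mul_assoc, h, mul_assoc]
  have expand : ∀ X : A, (X - algebraMap K A q) * (X + algebraMap K A q⁻¹)
      = X * X + (q⁻¹ - q) • X - 1 := by
    intro X
    have hc : X * algebraMap K A q⁻¹ = algebraMap K A q⁻¹ * X :=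
      (Algebra.commutes q⁻¹ X).symm
    have hab : algebraMap K A q * algebraMap K A q⁻¹ = 1 := by
      rw [← map_mul, mul_inv_cancel₀ hq, map_one]
    rw [sub_mul, mul_add, mul_add, hc, hab, Algebra.smul_def, map_sub, sub_mul]
    abel
  rw [expand, expand, smul_mul_assoc, mul_smul_comm]
  congr 1
  rw [sub_mul, mul_sub, add_mul, mul_add, one_mul, mul_one, smul_mul_assoc,
    mul_smul_comm, h, mul_assoc, h2]
end

section
/- Let A be an associative unital algebra over a field K, m an even positive integer, and X₀, X₁ ∈ A invertible elements satisfying the braid relation [X₀X₁⋯]_m = [X₁X₀⋯]_m. For invertible scalars q₀, q₁, l₀, l₁ with q_i⁻¹ − q_i ≠ 0, set E_i = (l_i/(q_i⁻¹ − q_i))·(X_i − q_i)(X_i + q_i⁻¹). Then E₁·[X₀X₁⋯]_{m−1} = [X₀X₁⋯]_{m−1}·E₁ and E₀·[X₁X₀⋯]_{m−1} = [X₁X₀⋯]_{m−1}·E₀. -/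
lemma altProd_succ' {A : Type*} [Monoid A] :
    ∀ (n : ℕ) (x y : A), altProd x y (n + 1) = altProd x y n * (if Even n then x else y)
  | 0, x, y => by simp [altProd]
  | n + 1, x, y => by
    rw [show altProd x y (n + 2) = x * altProd y x (n + 1) from rfl,
      altProd_succ' n y x, show altProd x y (n + 1) = x * altProd y x n from rfl, mul_assoc]
    rcases Nat.even_or_odd n with h | h
    · simp [h, Nat.even_add_one]
    · simp [Nat.not_even_iff_odd.mpr h, Nat.even_add_one]

/-- For invertible `X₀, X₁` satisfying the braid relation of even length `m`, and
`Eᵢ = (lᵢ/(qᵢ⁻¹−qᵢ))·(Xᵢ − qᵢ)(Xᵢ + qᵢ⁻¹)`, one has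
`E₁·[X₀X₁⋯]_{m−1} = [X₀X₁⋯]_{m−1}·E₁` and `E₀·[X₁X₀⋯]_{m−1} = [X₁X₀⋯]_{m−1}·E₀`. -/
theorem stmt8 {K A : Type*} [Field K] [Ring A] [Algebra K A]
    (m : ℕ) (hm : Even m) (hm0 : 0 < m) (X₀ X₁ : A) (hX₀ : IsUnit X₀) (hX₁ : IsUnit X₁)
    (hbraid : altProd X₀ X₁ m = altProd X₁ X₀ m)
    (q₀ q₁ l₀ l₁ : K) (hq₀ : q₀ ≠ 0) (hq₁ : q₁ ≠ 0) (hl₀ : l₀ ≠ 0) (hl₁ : l₁ ≠ 0)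
    (hq₀2 : q₀⁻¹ - q₀ ≠ 0) (hq₁2 : q₁⁻¹ - q₁ ≠ 0) :
    ((l₁ / (q₁⁻¹ - q₁)) • ((X₁ - algebraMap K A q₁) * (X₁ + algebraMap K A q₁⁻¹)))
        * altProd X₀ X₁ (m - 1) =
      altProd X₀ X₁ (m - 1)
        * ((l₁ / (q₁⁻¹ - q₁)) • ((X₁ - algebraMap K A q₁) * (X₁ + algebraMap K A q₁⁻¹))) ∧
    ((l₀ / (q₀⁻¹ - q₀)) • ((X₀ - algebraMap K A q₀) * (X₀ + algebraMap K A q₀⁻¹)))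
        * altProd X₁ X₀ (m - 1) =
      altProd X₁ X₀ (m - 1)
        * ((l₀ / (q₀⁻¹ - q₀)) • ((X₀ - algebraMap K A q₀) * (X₀ + algebraMap K A q₀⁻¹))) := by
  obtain ⟨k, rfl⟩ : ∃ k, m = k + 1 := ⟨m - 1, (Nat.succ_pred_eq_of_pos hm0).symm⟩
  have hk : ¬ Even k := by simpa [Nat.even_add_one] using hm
  simp only [Nat.add_sub_cancel]
  have h1 : altProd X₀ X₁ (k + 1) = altProd X₀ X₁ k * X₁ := by
    rw [altProd_succ' k X₀ X₁, if_neg hk]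
  have h2 : altProd X₁ X₀ (k + 1) = altProd X₁ X₀ k * X₀ := by
    rw [altProd_succ' k X₁ X₀, if_neg hk]
  have hc1 : Commute X₁ (altProd X₀ X₁ k) := by
    have : X₁ * altProd X₀ X₁ k = altProd X₀ X₁ k * X₁ := by
      rw [← h1, hbraid]; rfl
    exact this
  have hc0 : Commute X₀ (altProd X₁ X₀ k) := by
    have : X₀ * altProd X₁ X₀ k = altProd X₁ X₀ k * X₀ := by
      rw [← h2, ← hbraid]; rfl
    exact this
  have key : ∀ (x w : A) (a b : K), Commute x w →
      Commute ((x - algebraMap K A a) * (x + algebraMap K A b)) w := by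
    intro x w a b h
    exact ((h.sub_left (Algebra.commutes a w)).mul_left (h.add_left (Algebra.commutes b w)))
  constructor
  · have h := key X₁ (altProd X₀ X₁ k) q₁ q₁⁻¹ hc1
    rw [smul_mul_assoc, h.eq, mul_smul_comm]
  · have h := key X₀ (altProd X₁ X₀ k) q₀ q₀⁻¹ hc0
    rw [smul_mul_assoc, h.eq, mul_smul_comm]
end
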